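/- arXiv:1301.2062 — 3 statements merged into one kernel-verified Lean document; each statement's English description precedes it below -/
import Mathlib

section
/- Fix d ≥ 1, K ≥ 1, κ ≤ K, and s > 0. Let 1 ≤ j_1 < j_2 < ... < j_κ ≤ K be indices, set ω_j = (j(j+d-1))^s, and let D be the κ×κ matrix whose (k,m) entry is the (k-1)-st derivative d^{k-1}ω_{j_m}/ds^{k-1} = (ln λ_{j_m})^{k-1} ω_{j_m}, where λ_j = j(j+d-1). Then there exists a constant C > 0 (depending only on d and s, not on κ or the choice of indices) such that |det D| ≥ C^{κ²}/K^{2κ²}. -/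
theorem natkey (d K p q : ℕ) (hd : 1 ≤ d) (hK : 1 ≤ K) (hp : 1 ≤ p) (hpq : p < q) (hqK : q ≤ K) :
    q * (q + d - 1) ≤ 2 * d * K * (q * (q + d - 1) - p * (p + d - 1)) := by
  obtain ⟨d', rfl⟩ : ∃ d', d = 1 + d' := ⟨d - 1, by omega⟩
  obtain ⟨t, rfl⟩ : ∃ t, q = p + t + 1 := ⟨q - p - 1, by omega⟩
  have e1 : p + t + 1 + (1 + d') - 1 = p + t + 1 + d' := by omega
  have e2 : p + (1 + d') - 1 = p + d' := by omega
  rw [e1, e2]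
  have h1 : (p+t+1) * (p+t+1+d') = p*(p+d') + (t+1)*(2*p+t+1+d') := by ring
  rw [h1, Nat.add_sub_cancel_left]
  have hA : p + t + 1 + d' ≤ 2*(1+d')*K := by nlinarith
  have hB : p + t + 1 ≤ (t+1)*(2*p+t+1+d') := by nlinarith
  calc p*(p+d') + (t+1)*(2*p+t+1+d')
      ≤ (p+t+1)*(p+t+1+d') := by rw [h1]
    _ ≤ ((t+1)*(2*p+t+1+d')) * (2*(1+d')*K) := Nat.mul_le_mul hB hA
    _ = 2*(1+d')*K*((t+1)*(2*p+t+1+d')) := by ring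

theorem gapkey (d K p q : ℕ) (hd : 1 ≤ d) (hK : 1 ≤ K) (hp : 1 ≤ p) (hpq : p < q) (hqK : q ≤ K) :
    1 / (2 * (d : ℝ) * K) ≤
      Real.log ((q * (q + d - 1) : ℕ) : ℝ) - Real.log ((p * (p + d - 1) : ℕ) : ℝ) := by
  have hNp1 : 1 ≤ p * (p + d - 1) := by
    have := Nat.mul_le_mul hp (show 1 ≤ p + d - 1 by omega); omega
  have hle : p * (p + d - 1) ≤ q * (q + d - 1) :=
    Nat.mul_le_mul (le_of_lt hpq) (by omega)
  have hkey := natkey d K p q hd hK hp hpq hqK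
  set Np : ℝ := ((p * (p + d - 1) : ℕ) : ℝ) with hNpdef
  set Nq : ℝ := ((q * (q + d - 1) : ℕ) : ℝ) with hNqdef
  have hNp : (0:ℝ) < Np := by rw [hNpdef]; exact_mod_cast Nat.lt_of_lt_of_le Nat.zero_lt_one hNp1
  have hNq : (0:ℝ) < Nq := lt_of_lt_of_le hNp (by rw [hNpdef, hNqdef]; exact_mod_cast hle)
  have hDK : (0:ℝ) < 2 * (d:ℝ) * K := by positivity
  have hcast : Nq ≤ 2 * (d:ℝ) * K * (Nq - Np) := by
    rw [hNpdef, hNqdef]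
    have : ((q * (q + d - 1) : ℕ) : ℝ) ≤ ((2 * d * K * (q * (q + d - 1) - p * (p + d - 1)) : ℕ) : ℝ) :=
      Nat.cast_le.mpr hkey
    push_cast [Nat.cast_sub hle] at this ⊢
    linarith
  have hlog := Real.log_le_sub_one_of_pos (show (0:ℝ) < Np / Nq by positivity)
  rw [Real.log_div hNp.ne' hNq.ne'] at hlog
  have h2 : 1 / (2 * (d:ℝ) * K) ≤ 1 - Np / Nq := by
    have : 1 - Np / Nq = (Nq - Np) / Nq := by field_simp
    rw [this, div_le_div_iff₀ hDK hNq]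
    nlinarith
  linarith

/-- There is `C > 0` (depending only on `d`, `s`) such that for any `1 ≤ κ ≤ K`
and indices `1 ≤ j_1 < ... < j_κ ≤ K`, the determinant of the matrix of the
successive `s`-derivatives of the frequencies `ω_j = (j(j+d-1))^s` satisfies
`|det D| ≥ C^{κ²} / K^{2κ²}`. -/
theorem stmt5 (d : ℕ) (hd : 1 ≤ d) (s : ℝ) (hs : 0 < s) :
    ∃ C > 0, ∀ K κ : ℕ, 1 ≤ K → 1 ≤ κ → κ ≤ K →
      ∀ j : Fin κ → ℕ, StrictMono j → (∀ m, 1 ≤ j m) → (∀ m, j m ≤ K) →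
        |(Matrix.of fun k m : Fin κ =>
            Real.log ((j m * (j m + d - 1) : ℕ) : ℝ) ^ (k : ℕ) *
              ((j m * (j m + d - 1) : ℕ) : ℝ) ^ s).det|
          ≥ C ^ (κ ^ 2) / (K : ℝ) ^ (2 * κ ^ 2) := by
  refine ⟨1 / (2 * (d : ℝ)), by positivity, ?_⟩
  intro K κ hK hκ hκK j hj hj1 hjK
  set x : Fin κ → ℝ := fun m => Real.log ((j m * (j m + d - 1) : ℕ) : ℝ) with hx
  set a : Fin κ → ℝ := fun m => ((j m * (j m + d - 1) : ℕ) : ℝ) ^ s with ha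
  -- factor the matrix
  have hmat : (Matrix.of fun k m : Fin κ =>
      Real.log ((j m * (j m + d - 1) : ℕ) : ℝ) ^ (k : ℕ) *
        ((j m * (j m + d - 1) : ℕ) : ℝ) ^ s)
      = (Matrix.vandermonde x).transpose * Matrix.diagonal a := by
    ext k m
    simp [Matrix.mul_diagonal, Matrix.vandermonde, x, a]
  rw [hmat, Matrix.det_mul, Matrix.det_transpose, Matrix.det_diagonal, Matrix.det_vandermonde]
  -- basic positivity facts
  have hN1 : ∀ m, (1:ℝ) ≤ ((j m * (j m + d - 1) : ℕ) : ℝ) := by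
    intro m
    have h1 : 1 ≤ j m * (j m + d - 1) := by
      have := Nat.mul_le_mul (hj1 m) (show 1 ≤ j m + d - 1 by have := hj1 m; omega); omega
    exact_mod_cast h1
  have ha1 : ∀ m, (1:ℝ) ≤ a m := by
    intro m
    calc (1:ℝ) = 1 ^ s := (Real.one_rpow s).symm
      _ ≤ ((j m * (j m + d - 1) : ℕ) : ℝ) ^ s :=
        Real.rpow_le_rpow zero_le_one (hN1 m) hs.le
  set ε : ℝ := 1 / (2 * (d : ℝ) * K) with hεdef
  have hε : 0 < ε := by positivity
  have hε1 : ε ≤ 1 := by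
    rw [hεdef, div_le_one (by positivity)]
    have hd' : (1:ℝ) ≤ d := by exact_mod_cast hd
    have hK' : (1:ℝ) ≤ K := by exact_mod_cast hK
    nlinarith
  have hgap : ∀ i l : Fin κ, i < l → ε ≤ x l - x i := by
    intro i l hil
    exact gapkey d K (j i) (j l) hd hK (hj1 i) (hj hil) (hjK l)
  -- bound the Vandermonde product
  have hvand : ε ^ (κ ^ 2) ≤ ∏ i : Fin κ, ∏ l ∈ Finset.Ioi i, (x l - x i) := by
    have hsum : (∑ i : Fin κ, (Finset.Ioi i).card) ≤ κ ^ 2 := by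
      calc (∑ i : Fin κ, (Finset.Ioi i).card)
          ≤ ∑ _i : Fin κ, κ := Finset.sum_le_sum (fun i _ => by
            simpa using Finset.card_le_univ (Finset.Ioi i))
        _ = κ * κ := by simp [Finset.sum_const, mul_comm]
        _ = κ ^ 2 := (sq κ).symm
    calc ε ^ (κ ^ 2) ≤ ε ^ (∑ i : Fin κ, (Finset.Ioi i).card) :=
          pow_le_pow_of_le_one hε.le hε1 hsum
      _ = ∏ i : Fin κ, ε ^ (Finset.Ioi i).card := (Finset.prod_pow_eq_pow_sum _ _ _).symm
      _ = ∏ i : Fin κ, ∏ _l ∈ Finset.Ioi i, ε := by simp [Finset.prod_const]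
      _ ≤ ∏ i : Fin κ, ∏ l ∈ Finset.Ioi i, (x l - x i) := by
          refine Finset.prod_le_prod (fun i _ => Finset.prod_nonneg (fun l hl => hε.le)) ?_
          intro i _
          exact Finset.prod_le_prod (fun l hl => hε.le)
            (fun l hl => hgap i l (Finset.mem_Ioi.mp hl))
  -- nonnegativity, remove the abs
  have hVnn : 0 ≤ ∏ i : Fin κ, ∏ l ∈ Finset.Ioi i, (x l - x i) :=
    le_trans (pow_nonneg hε.le _) hvand
  have hann : (1:ℝ) ≤ ∏ m : Fin κ, a m := by
    have := Finset.prod_le_prod (s := Finset.univ) (f := fun _ : Fin κ => (1:ℝ)) (g := a)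
      (fun _ _ => zero_le_one) (fun m _ => ha1 m)
    simpa using this
  rw [ge_iff_le, abs_mul, abs_of_nonneg hVnn,
    abs_of_nonneg (le_trans zero_le_one hann)]
  -- final chain
  have hKpos : (0:ℝ) < K := by exact_mod_cast hK
  have hεsplit : ε ^ (κ ^ 2) = (1 / (2 * (d:ℝ))) ^ (κ ^ 2) / (K:ℝ) ^ (κ ^ 2) := by
    rw [hεdef]
    rw [show 1 / (2 * (d:ℝ) * K) = (1 / (2 * (d:ℝ))) / K by ring, div_pow]
  calc (1 / (2 * (d:ℝ))) ^ (κ ^ 2) / (K : ℝ) ^ (2 * κ ^ 2)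
      ≤ (1 / (2 * (d:ℝ))) ^ (κ ^ 2) / (K : ℝ) ^ (κ ^ 2) := by
        apply div_le_div_of_nonneg_left (by positivity) (by positivity)
        exact pow_le_pow_right₀ (by exact_mod_cast hK) (by nlinarith)
    _ = ε ^ (κ ^ 2) := hεsplit.symm
    _ = ε ^ (κ ^ 2) * 1 := (mul_one _).symm
    _ ≤ (∏ i : Fin κ, ∏ l ∈ Finset.Ioi i, (x l - x i)) * ∏ m : Fin κ, a m :=
        mul_le_mul hvand hann zero_le_one hVnn
end

section
/- Let f : (a,b) → ℝ be a C^κ function with |f^{(κ)}| ≤ M on (a,b), and suppose that some derivative of order ≤ κ-1 of f is bounded below in absolute value by δ > 0 on all of (a,b). Then the measure of {s ∈ (a,b) : |f(s)| < ε} tends to 0 as ε → 0. -/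
open MeasureTheory Set

/-- If a finite set `T` separates any two points of `S`, then `S` is finite. -/
lemma sep_finite' (T : Finset ℝ) :
    ∀ S : Set ℝ, (∀ x ∈ S, ∀ y ∈ S, x < y → ((T : Set ℝ) ∩ Ioo x y).Nonempty) → S.Finite := by
  induction T using Finset.induction with
  | empty =>
    intro S hsep
    refine Set.Subsingleton.finite fun x hx y hy => ?_
    by_contra hne
    rcases lt_or_gt_of_ne hne with h | h
    · obtain ⟨t, ht, -⟩ := hsep x hx y hy h
      simpa using ht
    · obtain ⟨t, ht, -⟩ := hsep y hy x hx h
      simpa using ht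
  | @insert t T' hnot ih =>
    intro S hsep
    simp only [Finset.coe_insert] at hsep
    have h1 : (S ∩ Iic t).Finite := by
      refine ih _ fun x hx y hy hxy => ?_
      obtain ⟨u, hu, huo⟩ := hsep x hx.1 y hy.1 hxy
      rcases hu with rfl | hu
      · exact absurd (lt_of_lt_of_le huo.2 hy.2) (lt_irrefl _)
      · exact ⟨u, hu, huo⟩
    have h2 : (S ∩ Ici t).Finite := by
      refine ih _ fun x hx y hy hxy => ?_
      obtain ⟨u, hu, huo⟩ := hsep x hx.1 y hy.1 hxy
      rcases hu with rfl | hu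
      · exact absurd (lt_of_le_of_lt hx.2 huo.1) (lt_irrefl _)
      · exact ⟨u, hu, huo⟩
    have : S ⊆ (S ∩ Iic t) ∪ (S ∩ Ici t) := by
      intro x hx
      rcases le_total x t with h | h
      · exact Or.inl ⟨hx, h⟩
      · exact Or.inr ⟨hx, h⟩
    exact (h1.union h2).subset this

/-- Zeros of a function with a derivative bounded below are finite. -/
lemma zeros_finite (a b δ : ℝ) (hδ : 0 < δ) :
    ∀ (k : ℕ) (g : ℝ → ℝ), ContDiffOn ℝ (k : ℕ∞) g (Ioo a b) →
    (∀ s ∈ Ioo a b, δ ≤ |iteratedDeriv k g s|) →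
    {s ∈ Ioo a b | g s = 0}.Finite := by
  intro k
  induction k with
  | zero =>
    intro g _ hlow
    convert Set.finite_empty
    ext s
    simp only [mem_setOf_eq, mem_empty_iff_false, iff_false, not_and]
    intro hs hgs
    have := hlow s hs
    rw [iteratedDeriv_zero, hgs, abs_zero] at this
    linarith
  | succ k ih =>
    intro g hg hlow
    have hg' : ContDiffOn ℝ (k : ℕ∞) (deriv g) (Ioo a b) := by
      apply hg.deriv_of_isOpen isOpen_Ioo
      exact_mod_cast le_of_eq (by push_cast; ring)
    have hlow' : ∀ s ∈ Ioo a b, δ ≤ |iteratedDeriv k (deriv g) s| := by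
      intro s hs
      rw [← iteratedDeriv_succ']
      exact hlow s hs
    have hT : {s ∈ Ioo a b | deriv g s = 0}.Finite := ih (deriv g) hg' hlow'
    refine sep_finite' hT.toFinset _ fun x hx y hy hxy => ?_
    rw [Set.Finite.coe_toFinset]
    have hsub : Icc x y ⊆ Ioo a b := Icc_subset_Ioo hx.1.1 hy.1.2
    obtain ⟨c, hc, hc0⟩ := exists_deriv_eq_zero hxy (hg.continuousOn.mono hsub)
      (hx.2.trans hy.2.symm)
    exact ⟨c, ⟨hsub ⟨hc.1.le, hc.2.le⟩, hc0⟩, hc⟩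

/-- Quantitative nondegeneracy: if `f` is `C^κ` on `(a,b)`, `|f^{(κ)}| ≤ M`,
and some derivative of order `≤ κ-1` is bounded below by `δ > 0` on all of
`(a,b)`, then the measure of `{s ∈ (a,b) : |f s| < ε}` tends to `0` as `ε → 0⁺`. -/
theorem stmt11 (a b : ℝ) (hab : a < b) (κ : ℕ) (hκ : 1 ≤ κ) (f : ℝ → ℝ)
    (hf : ContDiffOn ℝ (κ : ℕ∞) f (Ioo a b)) (δ M : ℝ) (hδ : 0 < δ)
    (hM : ∀ s ∈ Ioo a b, |iteratedDeriv κ f s| ≤ M)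
    (hlow : ∃ k ≤ κ - 1, ∀ s ∈ Ioo a b, δ ≤ |iteratedDeriv k f s|) :
    Filter.Tendsto (fun ε : ℝ => volume {s ∈ Ioo a b | |f s| < ε})
      (nhdsWithin 0 (Ioi 0)) (nhds 0) := by
  obtain ⟨k, hk, hlow⟩ := hlow
  have hfk : ContDiffOn ℝ (k : ℕ∞) f (Ioo a b) := by
    apply hf.of_le
    exact_mod_cast le_trans hk (Nat.sub_le _ _)
  have hZ : {s ∈ Ioo a b | f s = 0}.Finite := zeros_finite a b δ hδ k f hfk hlow
  have hcont : ContinuousOn f (Ioo a b) := hf.continuousOn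
  have hmeas : ∀ ε : ℝ, ε > 0 → NullMeasurableSet {s ∈ Ioo a b | |f s| < ε} volume := by
    intro ε _
    have : {s ∈ Ioo a b | |f s| < ε} = Ioo a b ∩ (fun s => |f s|) ⁻¹' Iio ε := rfl
    rw [this]
    exact ((hcont.abs.isOpen_inter_preimage isOpen_Ioo isOpen_Iio).measurableSet).nullMeasurableSet
  have hkey := tendsto_measure_biInter_gt (μ := volume)
    (s := fun ε : ℝ => {s ∈ Ioo a b | |f s| < ε}) (a := 0) hmeas
    (fun i j _ hij => fun x hx => ⟨hx.1, lt_of_lt_of_le hx.2 hij⟩)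
    ⟨1, one_pos,
      ne_of_lt ((measure_mono (Set.sep_subset (Ioo a b) _)).trans_lt measure_Ioo_lt_top)⟩
  have hiInter : (⋂ ε > (0:ℝ), {s ∈ Ioo a b | |f s| < ε}) = {s ∈ Ioo a b | f s = 0} := by
    ext x
    simp only [mem_iInter, mem_setOf_eq]
    constructor
    · intro h
      obtain ⟨hx, -⟩ := h 1 one_pos
      refine ⟨hx, ?_⟩
      by_contra hne
      have := h (|f x|) (abs_pos.mpr hne)
      exact absurd this.2 (lt_irrefl _)
    · intro ⟨hx, hfx⟩ ε hε
      exact ⟨hx, by rw [hfx, abs_zero]; exact hε⟩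
  rw [hiInter] at hkey
  have : volume {s ∈ Ioo a b | f s = 0} = 0 := hZ.measure_zero _
  rw [this] at hkey
  exact hkey
end

section
/- Fix d ≥ 1. For s > 1/2 and j ≥ 1 let ω_j = (j(j+d-1))^s. Then for any integers m > n ≥ 1, ω_m - ω_n ≥ ω_m^{(2s-1)/(2s)} · c for some constant c > 0 depending only on s and d; in particular the frequency gaps ω_m - ω_n are bounded below by a positive power of the larger frequency. -/
open Real

/-- Key analytic lemma: `b^s - a^s ≥ (min s 1) * b^(s-1) * (b-a)` for `0 < a ≤ b`, `0 < s`. -/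
lemma aux_gap (s : ℝ) (hs : 0 < s) {a b : ℝ} (ha : 0 < a) (hab : a ≤ b) :
    min s 1 * (b ^ (s - 1) * (b - a)) ≤ b ^ s - a ^ s := by
  have hb : 0 < b := ha.trans_le hab
  rcases le_or_gt s 1 with h1 | h1
  · rw [min_eq_left h1]
    have ht : (0:ℝ) < a / b := div_pos ha hb
    have key : (a / b) ^ s ≤ 1 + s * (a / b - 1) := by
      have := rpow_one_add_le_one_add_mul_self (s := a / b - 1) (by linarith) hs.le h1
      simpa using this
    have hdiv : (a / b) ^ s = a ^ s / b ^ s := Real.div_rpow ha.le hb.le s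
    have hbs : 0 < b ^ s := rpow_pos_of_pos hb s
    have key2 : a ^ s ≤ (1 + s * (a / b - 1)) * b ^ s := by
      rw [hdiv] at key
      calc a ^ s = a ^ s / b ^ s * b ^ s := by field_simp
        _ ≤ (1 + s * (a / b - 1)) * b ^ s := by
            exact mul_le_mul_of_nonneg_right key hbs.le
    have hb1 : b ^ (s - 1) * b = b ^ s := by
      rw [← Real.rpow_add_one hb.ne' (s - 1)]; ring_nf
    have hba : b ^ (s - 1) * a = b ^ s * (a / b) := by
      rw [← hb1]; field_simp
    nlinarith [hbs, mul_pos (rpow_pos_of_pos hb (s-1)) ha]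
  · rw [min_eq_right h1.le]
    have h2 : a ^ (s - 1) ≤ b ^ (s - 1) :=
      Real.rpow_le_rpow ha.le hab (by linarith)
    have ha1 : a ^ (s - 1) * a = a ^ s := by
      rw [← Real.rpow_add_one ha.ne' (s - 1)]; ring_nf
    have hb1 : b ^ (s - 1) * b = b ^ s := by
      rw [← Real.rpow_add_one hb.ne' (s - 1)]; ring_nf
    have : b ^ (s - 1) * a ≥ a ^ s := by
      rw [← ha1]; exact mul_le_mul_of_nonneg_right h2 ha.le
    nlinarith

/-- For `s > 1/2` there is `c > 0` (depending only on `s`, `d`) with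
`ω_m - ω_n ≥ ω_m^{(2s-1)/(2s)} · c` for all `m > n ≥ 1`, where
`ω_j = (j(j+d-1))^s`. -/
theorem stmt12 (d : ℕ) (hd : 1 ≤ d) (s : ℝ) (hs : 1 / 2 < s) :
    ∃ c > 0, ∀ m n : ℕ, 1 ≤ n → n < m →
      ((m * (m + d - 1) : ℕ) : ℝ) ^ s - ((n * (n + d - 1) : ℕ) : ℝ) ^ s
        ≥ (((m * (m + d - 1) : ℕ) : ℝ) ^ s) ^ ((2 * s - 1) / (2 * s)) * c := by
  have hs0 : 0 < s := by linarith
  have hdpos : (0:ℝ) < Real.sqrt d := Real.sqrt_pos.mpr (by exact_mod_cast hd)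
  refine ⟨min s 1 / Real.sqrt d, div_pos (lt_min hs0 one_pos) hdpos, ?_⟩
  intro m n hn hnm
  have hm : 1 ≤ m := hn.trans hnm.le
  -- set up real values of λ_n, λ_m
  set a : ℝ := ((n * (n + d - 1) : ℕ) : ℝ) with haa
  set b : ℝ := ((m * (m + d - 1) : ℕ) : ℝ) with hbb
  have hcastb : b = (m : ℝ) * ((m : ℝ) + (d : ℝ) - 1) := by
    rw [hbb]; push_cast [Nat.cast_sub (show 1 ≤ m + d by omega)]; ring
  have hcasta : a = (n : ℝ) * ((n : ℝ) + (d : ℝ) - 1) := by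
    rw [haa]; push_cast [Nat.cast_sub (show 1 ≤ n + d by omega)]; ring
  have hn1 : (1:ℝ) ≤ (n:ℝ) := by exact_mod_cast hn
  have hmn : (n:ℝ) + 1 ≤ (m:ℝ) := by exact_mod_cast hnm
  have hd1 : (1:ℝ) ≤ (d:ℝ) := by exact_mod_cast hd
  have hm1 : (1:ℝ) ≤ (m:ℝ) := by exact_mod_cast hm
  have ha : 0 < a := by rw [hcasta]; nlinarith
  have hab : a ≤ b := by rw [hcasta, hcastb]; nlinarith
  have hb : 0 < b := ha.trans_le hab
  -- gap in λ : b - a ≥ m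
  have hgap : (m:ℝ) ≤ b - a := by rw [hcasta, hcastb]; nlinarith
  -- b ≤ d * m^2
  have hble : b ≤ (d:ℝ) * (m:ℝ)^2 := by rw [hcastb]; nlinarith [mul_nonneg (mul_nonneg (by linarith : (0:ℝ) ≤ (m:ℝ)) (by linarith : (0:ℝ) ≤ (d:ℝ)-1)) (by linarith : (0:ℝ) ≤ (m:ℝ)-1)]
  -- sqrt b ≤ sqrt d * m
  have hsqrt : Real.sqrt b ≤ Real.sqrt d * (m:ℝ) := by
    have : Real.sqrt b ≤ Real.sqrt ((d:ℝ) * (m:ℝ)^2) := Real.sqrt_le_sqrt hble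
    rw [Real.sqrt_mul (by positivity), Real.sqrt_sq (by positivity)] at this
    exact this
  -- exponent algebra
  have hexp : (b ^ s) ^ ((2 * s - 1) / (2 * s)) = b ^ (s - 1) * b ^ ((1:ℝ)/2) := by
    rw [← Real.rpow_mul hb.le, ← Real.rpow_add hb]
    congr 1
    field_simp
    ring
  -- b ^ (1/2) = sqrt b
  have hhalf : b ^ ((1:ℝ)/2) = Real.sqrt b := (Real.sqrt_eq_rpow b).symm
  have key := aux_gap s hs0 ha hab
  have hmin : 0 < min s 1 := lt_min hs0 one_pos
  have hbs1 : 0 < b ^ (s - 1) := Real.rpow_pos_of_pos hb _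
  calc (b ^ s) ^ ((2 * s - 1) / (2 * s)) * (min s 1 / Real.sqrt d)
      = min s 1 * (b ^ (s - 1) * (Real.sqrt b / Real.sqrt d)) := by
        rw [hexp, hhalf]; ring
    _ ≤ min s 1 * (b ^ (s - 1) * (b - a)) := by
        apply mul_le_mul_of_nonneg_left _ hmin.le
        apply mul_le_mul_of_nonneg_left _ hbs1.le
        rw [div_le_iff₀ hdpos]
        calc Real.sqrt b ≤ Real.sqrt d * (m:ℝ) := hsqrt
          _ ≤ (b - a) * Real.sqrt d := by
              rw [mul_comm]
              exact mul_le_mul_of_nonneg_right hgap hdpos.le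
    _ ≤ b ^ s - a ^ s := key
end
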